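/- arXiv:2502.00720 — 2 statements merged into one kernel-verified Lean document; each statement's English description precedes it below -/
import Mathlib

section
/- For the Stokes corner function V₀(ρ,θ) = (√2/3)·ρ^{3/2}·cos(3θ/2 + 3π/4), the squared gradient satisfies |∇V₀(x)|² = -x₂ at every point x = (ρcosθ, ρsinθ) on the two boundary rays θ = -5π/6 and θ = -π/6 with ρ > 0, where x₂ = ρ sinθ. -/
/-! The squared gradient of `V₀` is `ρ / 2` at every point with `ρ > 0`, whatever `θ`: the
squared radial and angular derivatives are `(ρ / 2) cos² φ` and `(ρ / 2) sin² φ` for the same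
angle `φ = 3θ/2 + 3π/4`. Both boundary rays have `sin θ = -1/2`, so there `ρ / 2 = -x₂`. -/

open Real

/-- The Stokes corner flow in polar coordinates:
`V₀(ρ,θ) = (√2/3) ρ^{3/2} cos(3θ/2 + 3π/4)`. -/
noncomputable def V0p (ρ θ : ℝ) : ℝ :=
  (Real.sqrt 2 / 3) * ρ ^ ((3:ℝ)/2) * Real.cos (3*θ/2 + 3*π/4)

lemma hasDerivAt_V0p_rho (θ : ℝ) {ρ : ℝ} (hρ : ρ ≠ 0) :
    HasDerivAt (fun r => V0p r θ)
      (Real.sqrt 2 / 3 * ((3/2) * ρ ^ ((1:ℝ)/2)) * Real.cos (3*θ/2 + 3*π/4)) ρ := by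
  have h := ((Real.hasDerivAt_rpow_const (p := (3:ℝ)/2) (Or.inl hρ)).const_mul
    (Real.sqrt 2 / 3)).mul_const (Real.cos (3*θ/2 + 3*π/4))
  norm_num at h
  exact h

lemma hasDerivAt_V0p_theta (ρ θ : ℝ) :
    HasDerivAt (fun t => V0p ρ t)
      (Real.sqrt 2 / 3 * ρ ^ ((3:ℝ)/2) * (-Real.sin (3*θ/2 + 3*π/4) * (3/2))) θ := by
  have hlin : HasDerivAt (fun t : ℝ => 3*t/2 + 3*π/4) (3/2) θ := by
    simpa using (((hasDerivAt_id θ).const_mul (3:ℝ)).div_const 2).add_const (3*π/4)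
  exact ((Real.hasDerivAt_cos _).comp θ hlin).const_mul _

lemma V0p_gradient_sq_eq_half {ρ : ℝ} (hρ : 0 < ρ) (θ : ℝ) :
    (deriv (fun r => V0p r θ) ρ)^2 + (ρ^2)⁻¹ * (deriv (fun t => V0p ρ t) θ)^2 = ρ / 2 := by
  rw [(hasDerivAt_V0p_rho θ hρ.ne').deriv, (hasDerivAt_V0p_theta ρ θ).deriv]
  have hsqrt2 : Real.sqrt 2 ^ 2 = 2 := Real.sq_sqrt (by norm_num)
  have hhalf : (ρ ^ ((1:ℝ)/2)) ^ 2 = ρ := by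
    rw [← Real.sqrt_eq_rpow, Real.sq_sqrt hρ.le]
  have hthreehalves : (ρ ^ ((3:ℝ)/2)) ^ 2 = ρ ^ 3 := by
    rw [← Real.rpow_mul_natCast hρ.le, ← Real.rpow_natCast]
    norm_num
  generalize 3*θ/2 + 3*π/4 = φ
  field_simp
  rw [hsqrt2, hhalf, hthreehalves]
  linear_combination (2 * ρ ^ 3) * Real.sin_sq_add_cos_sq φ

lemma sin_eq_neg_half_of_boundary_ray {θ : ℝ} (hθ : θ = -5*π/6 ∨ θ = -π/6) :
    Real.sin θ = -(1/2) := by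
  rcases hθ with rfl | rfl
  · rw [show -5*π/6 = -(π - π/6) by ring, Real.sin_neg, Real.sin_pi_sub, Real.sin_pi_div_six]
  · rw [show -π/6 = -(π/6) by ring, Real.sin_neg, Real.sin_pi_div_six]

/-- On the two boundary rays `θ = -5π/6` and `θ = -π/6` (with `ρ > 0`) the squared gradient
`|∇V₀|² = (∂_ρ V₀)² + ρ⁻²(∂_θ V₀)²` equals `-x₂ = -ρ sin θ`. -/
theorem stmt1 (ρ θ : ℝ) (hρ : 0 < ρ) (hθ : θ = -5*π/6 ∨ θ = -π/6) :
    (deriv (fun r => V0p r θ) ρ)^2 + (ρ^2)⁻¹ * (deriv (fun t => V0p ρ t) θ)^2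
      = -(ρ * Real.sin θ) := by
  rw [V0p_gradient_sq_eq_half hρ θ, sin_eq_neg_half_of_boundary_ray hθ]
  ring
end

section
/- Let N ≥ 2 be an integer and let f : [0,π] → ℝ be continuous, nonnegative, with f(0) = f(π) = 0, ∫₀^π f(θ)² dθ = 1, satisfying f'' + N² f = 0 on the open set {f > 0}, and such that at every interior zero θ* of f the one-sided derivatives satisfy lim_{τ→θ*+} f'(τ) = -lim_{τ→θ*-} f'(τ). If moreover f > 0 on some subinterval, then f(θ) = |sin(Nθ)| / √(∫₀^π sin²(Nθ)dθ) for all θ ∈ [0,π]. -/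
open Real Set Filter Topology

/-! On an interval where `f > 0` the equation `f'' + N² f = 0`, together with the zeros at the
ends, forces `f` to be one positive arch `c sin (N (θ - α))` of length `π / N`. At the right end
of an arch `f'` tends to `-c N`, so by reflection it tends to `c N` just to the right; then `f`
cannot vanish on an interval there, since at its interior zeros the reflection condition fails
while `f'` stays near `c N`. Hence the next arch starts at once, with the same amplitude `c`. The
same argument at the infimum of `{f > 0}` shows that the first arch starts at `0`, so `N` arches
tile `[0, π]`, `f = c |sin (N θ)|`, and the normalisation of `∫ f²` fixes `c`. -/

section Harmonic

variable {n : ℝ} {f f' : ℝ → ℝ} {a b : ℝ}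

theorem exists_eq_harmonic_of_hasDerivAt (hn : n ≠ 0) (t₀ : ℝ)
    (hf : ∀ t ∈ Ioo a b, HasDerivAt f (f' t) t ∧ HasDerivAt f' (-n ^ 2 * f t) t) :
    ∃ A B : ℝ, ∀ t ∈ Ioo a b, f t = A * cos (n * (t - t₀)) + B * sin (n * (t - t₀)) ∧
      f' t = n * (B * cos (n * (t - t₀)) - A * sin (n * (t - t₀))) := by
  have hφ : ∀ t, HasDerivAt (fun s => n * (s - t₀)) n t := fun t => by
    simpa using ((hasDerivAt_id t).sub_const t₀).const_mul n
  have hconst : ∀ g : ℝ → ℝ, (∀ t ∈ Ioo a b, HasDerivAt g 0 t) →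
      ∃ c, ∀ t ∈ Ioo a b, g t = c := fun g hg =>
    isOpen_Ioo.exists_is_const_of_deriv_eq_zero isPreconnected_Ioo
      (fun t ht => (hg t ht).differentiableAt.differentiableWithinAt) fun t ht => (hg t ht).deriv
  -- the point `(f, f' / n)` of the phase plane, rotated back by the angle `n (t - t₀)`, is constant
  obtain ⟨A, hA⟩ := hconst (fun t => f t * cos (n * (t - t₀)) - f' t / n * sin (n * (t - t₀)))
    fun t ht => by
      refine (((hf t ht).1.mul (hφ t).cos).sub
        (((hf t ht).2.div_const n).mul (hφ t).sin)).congr_deriv ?_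
      field_simp
      ring
  obtain ⟨B, hB⟩ := hconst (fun t => f t * sin (n * (t - t₀)) + f' t / n * cos (n * (t - t₀)))
    fun t ht => by
      refine (((hf t ht).1.mul (hφ t).sin).add
        (((hf t ht).2.div_const n).mul (hφ t).cos)).congr_deriv ?_
      field_simp
      ring
  refine ⟨A, B, fun t ht => ?_⟩
  have hsc := sin_sq_add_cos_sq (n * (t - t₀))
  specialize hA t ht
  specialize hB t ht
  constructor
  · linear_combination cos (n * (t - t₀)) * hA + sin (n * (t - t₀)) * hB - f t * hsc
  · rw [← hA, ← hB]
    field_simp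
    linear_combination (-f' t) * hsc

end Harmonic

section Arch

variable {n α β c : ℝ} {f f' : ℝ → ℝ}

theorem lt_add_pi_div (hn : 0 < n) : α < α + π / n := lt_add_of_pos_right α (div_pos pi_pos hn)

theorem sin_mul_sub_pos (hn : 0 < n) {t : ℝ} (ht : t ∈ Ioo α (α + π / n)) :
    0 < sin (n * (t - α)) := by
  refine sin_pos_of_pos_of_lt_pi (mul_pos hn (sub_pos.2 ht.1)) ?_
  calc n * (t - α) < n * (π / n) := by gcongr; linarith [ht.2]
    _ = π := mul_div_cancel₀ π hn.ne'

structure IsArch (f f' : ℝ → ℝ) (n α c : ℝ) : Prop where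
  pos : 0 < c
  eqOn : EqOn f (fun t => c * sin (n * (t - α))) (Icc α (α + π / n))
  eqOn_deriv : EqOn f' (fun t => n * (c * cos (n * (t - α)))) (Ioo α (α + π / n))

namespace IsArch

variable (h : IsArch f f' n α c) (hn : 0 < n)
include h hn

theorem apply_pos {t : ℝ} (ht : t ∈ Ioo α (α + π / n)) : 0 < f t := by
  rw [h.eqOn (Ioo_subset_Icc_self ht)]
  exact mul_pos h.pos (sin_mul_sub_pos hn ht)

theorem apply_left : f α = 0 := by
  simpa using h.eqOn (left_mem_Icc.2 (lt_add_pi_div hn).le)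

theorem apply_right : f (α + π / n) = 0 := by
  simpa [mul_div_cancel₀ π hn.ne'] using h.eqOn (right_mem_Icc.2 (lt_add_pi_div hn).le)

theorem tendsto_deriv_right : Tendsto f' (𝓝[>] α) (𝓝 (n * c)) := by
  have hlim : Tendsto (fun t => n * (c * cos (n * (t - α)))) (𝓝[>] α) (𝓝 (n * c)) := by
    simpa using ((by fun_prop : Continuous fun t => n * (c * cos (n * (t - α)))).tendsto
      α).mono_left nhdsWithin_le_nhds
  exact hlim.congr' (eventuallyEq_of_mem (Ioo_mem_nhdsGT (lt_add_pi_div hn)) h.eqOn_deriv.symm)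

theorem tendsto_deriv_left : Tendsto f' (𝓝[<] (α + π / n)) (𝓝 (-(n * c))) := by
  have hlim : Tendsto (fun t => n * (c * cos (n * (t - α)))) (𝓝[<] (α + π / n))
      (𝓝 (-(n * c))) := by
    simpa [mul_div_cancel₀ π hn.ne'] using
      ((by fun_prop : Continuous fun t => n * (c * cos (n * (t - α)))).tendsto
        (α + π / n)).mono_left nhdsWithin_le_nhds
  exact hlim.congr' (eventuallyEq_of_mem (Ioo_mem_nhdsLT (lt_add_pi_div hn)) h.eqOn_deriv.symm)

end IsArch

theorem isArch_of_forall_pos (hn : 0 < n) (hαβ : α < β) (hcont : ContinuousOn f (Icc α β))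
    (hα : f α = 0) (hβ : f β = 0) (hpos : ∀ t ∈ Ioo α β, 0 < f t)
    (hode : ∀ t ∈ Ioo α β, HasDerivAt f (f' t) t ∧ HasDerivAt f' (-n ^ 2 * f t) t) :
    β = α + π / n ∧ ∃ c, IsArch f f' n α c := by
  obtain ⟨A, B, hAB⟩ := exists_eq_harmonic_of_hasDerivAt hn.ne' α hode
  have hext : EqOn f (fun t => A * cos (n * (t - α)) + B * sin (n * (t - α))) (Icc α β) :=
    EqOn.of_subset_closure (fun t ht => (hAB t ht).1) hcont (by fun_prop) Ioo_subset_Icc_self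
      (by rw [closure_Ioo hαβ.ne])
  have hA : A = 0 := by simpa [hα, eq_comm] using hext (left_mem_Icc.2 hαβ.le)
  subst hA
  have hfB : ∀ t ∈ Icc α β, f t = B * sin (n * (t - α)) := fun t ht => by simpa using hext ht
  have hle : β ≤ α + π / n := by
    by_contra! hlt
    have hmem : α + π / n ∈ Ioo α β := ⟨lt_add_pi_div hn, hlt⟩
    have := hpos _ hmem
    rw [hfB _ (Ioo_subset_Icc_self hmem), add_sub_cancel_left, mul_div_cancel₀ π hn.ne', sin_pi,
      mul_zero] at this
    exact this.false
  have hmid : (α + β) / 2 ∈ Ioo α (α + π / n) := ⟨by linarith, by linarith⟩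
  have hB : 0 < B := by
    have := hpos _ ⟨hmid.1, by linarith⟩
    rw [hfB _ ⟨hmid.1.le, by linarith⟩] at this
    exact pos_of_mul_pos_left this (sin_mul_sub_pos hn hmid).le
  have heq : β = α + π / n := by
    refine hle.antisymm (not_lt.1 fun hlt => ?_)
    rw [hfB β (right_mem_Icc.2 hαβ.le)] at hβ
    exact (mul_pos hB (sin_mul_sub_pos hn ⟨hαβ, hlt⟩)).ne' hβ
  subst heq
  exact ⟨rfl, B, hB, hfB, fun t ht => by simpa using (hAB t ht).2⟩

end Arch

section Zeros

variable {f : ℝ → ℝ} {a b : ℝ}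

theorem exists_first_zero (hf : ContinuousOn f (Icc a b)) (hab : a ≤ b) (hb : f b = 0) :
    ∃ β ∈ Icc a b, f β = 0 ∧ ∀ t ∈ Ico a β, f t ≠ 0 := by
  have hbdd : BddBelow (Icc a b ∩ f ⁻¹' {0}) := ⟨a, fun t ht => ht.1.1⟩
  obtain ⟨hmem, hzero⟩ := (hf.preimage_isClosed_of_isClosed isClosed_Icc
    isClosed_singleton).csInf_mem ⟨b, right_mem_Icc.2 hab, hb⟩ hbdd
  exact ⟨_, hmem, hzero, fun t ht h0 =>
    (csInf_le hbdd ⟨⟨ht.1, ht.2.le.trans hmem.2⟩, h0⟩).not_gt ht.2⟩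

theorem exists_last_zero (hf : ContinuousOn f (Icc a b)) (hab : a ≤ b) (ha : f a = 0) :
    ∃ α ∈ Icc a b, f α = 0 ∧ ∀ t ∈ Ioc α b, f t ≠ 0 := by
  have hbdd : BddAbove (Icc a b ∩ f ⁻¹' {0}) := ⟨b, fun t ht => ht.1.2⟩
  obtain ⟨hmem, hzero⟩ := (hf.preimage_isClosed_of_isClosed isClosed_Icc
    isClosed_singleton).csSup_mem ⟨a, left_mem_Icc.2 hab, ha⟩ hbdd
  exact ⟨_, hmem, hzero, fun t ht h0 =>
    (le_csSup hbdd ⟨⟨hmem.1.trans ht.1.le, ht.2⟩, h0⟩).not_gt ht.1⟩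

end Zeros

def HasReflectedDeriv (f' : ℝ → ℝ) (θ : ℝ) : Prop :=
  ∃ L, Tendsto f' (𝓝[>] θ) (𝓝 L) ∧ Tendsto f' (𝓝[<] θ) (𝓝 (-L))

namespace HasReflectedDeriv

variable {f' : ℝ → ℝ} {θ ε : ℝ} {s : Set ℝ}

theorem neg (h : HasReflectedDeriv f' θ) : HasReflectedDeriv (-f') θ :=
  let ⟨L, hR, hL⟩ := h
  ⟨-L, hR.neg, hL.neg⟩

theorem not_forall_le (h : HasReflectedDeriv f' θ) (hs : s ∈ 𝓝 θ) (hε : 0 < ε) :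
    ¬ ∀ t ∈ s, ε ≤ f' t := fun hle => by
  obtain ⟨L, hR, hL⟩ := h
  have hev : ∀ l ≤ 𝓝 θ, ∀ᶠ t in l, ε ≤ f' t := fun l hl => hl (mem_of_superset hs hle)
  have h₁ : ε ≤ L := ge_of_tendsto hR (hev _ nhdsWithin_le_nhds)
  have h₂ : ε ≤ -L := ge_of_tendsto hL (hev _ nhdsWithin_le_nhds)
  linarith

theorem not_forall_le_neg (h : HasReflectedDeriv f' θ) (hs : s ∈ 𝓝 θ) (hε : 0 < ε) :
    ¬ ∀ t ∈ s, f' t ≤ -ε := fun hle =>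
  h.neg.not_forall_le hs hε fun t ht => le_neg_of_le_neg (hle t ht)

end HasReflectedDeriv

structure IsAngularProfile (n : ℝ) (f f' : ℝ → ℝ) : Prop where
  continuousOn : ContinuousOn f (Icc 0 π)
  nonneg : ∀ θ ∈ Icc 0 π, 0 ≤ f θ
  apply_zero : f 0 = 0
  apply_pi : f π = 0
  hasDerivAt : ∀ θ ∈ Ioo 0 π, 0 < f θ → HasDerivAt f (f' θ) θ ∧ HasDerivAt f' (-n ^ 2 * f θ) θ
  reflect : ∀ θ ∈ Ioo 0 π, f θ = 0 → HasReflectedDeriv f' θ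

namespace IsAngularProfile

variable {n α β c : ℝ} {f f' : ℝ → ℝ} (hf : IsAngularProfile n f f')
include hf

theorem exists_isArch_of_pos (hn : 0 < n) {θ : ℝ} (hθ : θ ∈ Ioo 0 π) (hfθ : 0 < f θ) :
    ∃ α c, 0 ≤ α ∧ θ ∈ Ioo α (α + π / n) ∧ IsArch f f' n α c := by
  obtain ⟨α, hα, hfα, hα'⟩ :=
    exists_last_zero (hf.continuousOn.mono (Icc_subset_Icc le_rfl hθ.2.le)) hθ.1.le hf.apply_zero
  obtain ⟨β, hβ, hfβ, hβ'⟩ :=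
    exists_first_zero (hf.continuousOn.mono (Icc_subset_Icc hθ.1.le le_rfl)) hθ.2.le hf.apply_pi
  have hαθ : α < θ := hα.2.lt_of_ne fun h => hfθ.ne' (h ▸ hfα)
  have hθβ : θ < β := hβ.1.lt_of_ne fun h => hfθ.ne' (h ▸ hfβ)
  have hpos : ∀ t ∈ Ioo α β, 0 < f t := fun t ht =>
    (hf.nonneg t ⟨hα.1.trans ht.1.le, ht.2.le.trans hβ.2⟩).lt_of_ne' <| by
      rcases le_total t θ with h | h
      exacts [hα' t ⟨ht.1, h⟩, hβ' t ⟨h, ht.2⟩]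
  obtain ⟨rfl, c, hc⟩ := isArch_of_forall_pos hn (hαθ.trans hθβ)
    (hf.continuousOn.mono (Icc_subset_Icc hα.1 hβ.2)) hfα hfβ hpos fun t ht =>
      hf.hasDerivAt t ⟨hα.1.trans_lt ht.1, ht.2.trans_le hβ.2⟩ (hpos t ht)
  exact ⟨α, c, hα.1, ⟨hαθ, hθβ⟩, hc⟩

theorem exists_pos_right_of_tendsto_deriv {ℓ : ℝ} (hβ : 0 ≤ β) (hβπ : β < π)
    (hlim : Tendsto f' (𝓝[>] β) (𝓝 ℓ)) (hℓ : 0 < ℓ) : ∀ v > β, ∃ t ∈ Ioo β v, 0 < f t := by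
  intro v hv
  obtain ⟨u, hu, hsub⟩ := mem_nhdsGT_iff_exists_Ioo_subset.1 (hlim (Ici_mem_nhds (half_lt_self hℓ)))
  set w := min (min u v) π
  have hβw : β < w := lt_min (lt_min hu hv) hβπ
  have hτ : (β + w) / 2 ∈ Ioo β w := ⟨by linarith, by linarith⟩
  by_contra! hzero
  have hτ0 : f ((β + w) / 2) = 0 :=
    (hzero _ ⟨hτ.1, hτ.2.trans_le ((min_le_left _ _).trans (min_le_right _ _))⟩).antisymm
      (hf.nonneg _ ⟨by linarith, hτ.2.le.trans (min_le_right _ _)⟩)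
  -- on `(β, w)` the derivative stays above `ℓ / 2`, which no reflected zero allows
  exact (hf.reflect _ ⟨by linarith, hτ.2.trans_le (min_le_right _ _)⟩ hτ0).not_forall_le
    (Ioo_mem_nhds hτ.1 hτ.2) (half_pos hℓ) fun t ht =>
      hsub ⟨ht.1, ht.2.trans_le ((min_le_left _ _).trans (min_le_left _ _))⟩

theorem exists_pos_left_of_tendsto_deriv {ℓ : ℝ} (hβ : 0 < β) (hβπ : β ≤ π)
    (hlim : Tendsto f' (𝓝[<] β) (𝓝 ℓ)) (hℓ : ℓ < 0) : ∀ v < β, ∃ t ∈ Ioo v β, 0 < f t := by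
  intro v hv
  obtain ⟨u, hu, hsub⟩ :=
    mem_nhdsLT_iff_exists_Ioo_subset.1 (hlim (Iic_mem_nhds (show ℓ < ℓ / 2 by linarith)))
  set w := max (max u v) 0
  have hwβ : w < β := max_lt (max_lt hu hv) hβ
  have hτ : (w + β) / 2 ∈ Ioo w β := ⟨by linarith, by linarith⟩
  by_contra! hzero
  have hτ0 : f ((w + β) / 2) = 0 :=
    (hzero _ ⟨((le_max_right _ _).trans (le_max_left _ _)).trans_lt hτ.1, hτ.2⟩).antisymm
      (hf.nonneg _ ⟨(le_max_right _ _).trans hτ.1.le, by linarith⟩)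
  exact (hf.reflect _ ⟨(le_max_right _ _).trans_lt hτ.1, by linarith⟩ hτ0).not_forall_le_neg
    (Ioo_mem_nhds hτ.1 hτ.2) (show 0 < -(ℓ / 2) by linarith) fun t ht => by
      simpa using hsub ⟨((le_max_left _ _).trans (le_max_left _ _)).trans_lt ht.1, ht.2⟩

theorem isArch_of_frequently_pos (hn : 0 < n) (hβ : 0 ≤ β) (hβπ : β < π) (hfβ : f β = 0)
    (hfreq : ∀ v > β, ∃ t ∈ Ioo β v, 0 < f t) : ∃ c, IsArch f f' n β c := by
  have hstart : ∀ {t α c}, β < t → t ∈ Ioo α (α + π / n) → IsArch f f' n α c → β ≤ α :=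
    fun hβt ht hc => not_lt.1 fun hαβ => (hc.apply_pos hn ⟨hαβ, hβt.trans ht.2⟩).ne' hfβ
  obtain ⟨t₁, ht₁, hft₁⟩ := hfreq (min π (β + π / n)) (lt_min hβπ (lt_add_pi_div hn))
  have ht₁π : t₁ < π := ht₁.2.trans_le (min_le_left _ _)
  obtain ⟨α₁, c₁, -, hα₁, hc₁⟩ := hf.exists_isArch_of_pos hn ⟨hβ.trans_lt ht₁.1, ht₁π⟩ hft₁
  refine ⟨c₁, ?_⟩
  rcases (hstart ht₁.1 hα₁ hc₁).eq_or_lt with rfl | hβα₁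
  · exact hc₁
  -- a second arch between `β` and `α₁` would have to contain the zero `α₁`
  obtain ⟨t₂, ht₂, hft₂⟩ := hfreq α₁ hβα₁
  obtain ⟨α₂, c₂, -, hα₂, hc₂⟩ :=
    hf.exists_isArch_of_pos hn ⟨hβ.trans_lt ht₂.1, by linarith [ht₂.2, hα₁.1]⟩ hft₂
  have hβα₂ := hstart ht₂.1 hα₂ hc₂
  have := hc₂.apply_pos hn
    ⟨hα₂.1.trans ht₂.2, by linarith [ht₁.2, min_le_right π (β + π / n), hα₁.1]⟩
  exact absurd (hc₁.apply_left hn) this.ne'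

theorem isArch_add_pi_div (hn : 0 < n) (hc : IsArch f f' n α c) (hα : 0 ≤ α)
    (hlt : α + π / n < π) : IsArch f f' n (α + π / n) c := by
  have hβ : 0 ≤ α + π / n := hα.trans (lt_add_pi_div hn).le
  obtain ⟨L, hR, hL⟩ :=
    hf.reflect _ ⟨hα.trans_lt (lt_add_pi_div hn), hlt⟩ (hc.apply_right hn)
  obtain rfl : L = n * c := neg_injective (tendsto_nhds_unique hL (hc.tendsto_deriv_left hn))
  obtain ⟨c', hc'⟩ := hf.isArch_of_frequently_pos hn hβ hlt (hc.apply_right hn)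
    (hf.exists_pos_right_of_tendsto_deriv hβ hlt hR (mul_pos hn hc.pos))
  obtain rfl : c' = c :=
    mul_left_cancel₀ hn.ne' (tendsto_nhds_unique (hc'.tendsto_deriv_right hn) hR)
  exact hc'

theorem exists_isArch_zero (hn : 0 < n) (hpos : ∃ θ ∈ Ioo 0 π, 0 < f θ) :
    ∃ c, IsArch f f' n 0 c := by
  obtain ⟨θ, hθ⟩ := hpos
  set S := {t | t ∈ Ioo 0 π ∧ 0 < f t}
  have hbdd : BddBelow S := ⟨0, fun t ht => ht.1.1.le⟩
  have ha : 0 ≤ sInf S := le_csInf ⟨θ, hθ⟩ fun t ht => ht.1.1.le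
  have haπ : sInf S < π := (csInf_le hbdd hθ).trans_lt hθ.1.2
  have hbelow : ∀ t ∈ Ioo 0 (sInf S), ¬ 0 < f t := fun t ht hft =>
    (csInf_le hbdd ⟨⟨ht.1, ht.2.trans haπ⟩, hft⟩).not_gt ht.2
  have hfa : f (sInf S) = 0 := by
    refine (hf.nonneg _ ⟨ha, haπ.le⟩).antisymm' (not_lt.1 fun hfa => ?_)
    have ha₀ : 0 < sInf S := ha.lt_of_ne fun h => hfa.ne' (h ▸ hf.apply_zero)
    obtain ⟨α, c, hα, hαa, hc⟩ := hf.exists_isArch_of_pos hn ⟨ha₀, haπ⟩ hfa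
    exact hbelow ((α + sInf S) / 2) ⟨by linarith, by linarith [hαa.1]⟩
      (hc.apply_pos hn ⟨by linarith [hαa.1], by linarith [hαa.1, hαa.2]⟩)
  have hfreq : ∀ v > sInf S, ∃ t ∈ Ioo (sInf S) v, 0 < f t := fun v hv => by
    obtain ⟨t, ht, htv⟩ := exists_lt_of_csInf_lt ⟨θ, hθ⟩ hv
    exact ⟨t, ⟨(csInf_le hbdd ht).lt_of_ne fun h => ht.2.ne' (h ▸ hfa), htv⟩, ht.2⟩
  obtain ⟨c, hc⟩ := hf.isArch_of_frequently_pos hn ha haπ hfa hfreq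
  rcases ha.eq_or_lt with h | ha₀
  · exact ⟨c, h ▸ hc⟩
  -- the arch at `sInf S` would force, by reflection, positive values to its left
  obtain ⟨L, hR, hL⟩ := hf.reflect _ ⟨ha₀, haπ⟩ hfa
  obtain rfl : L = n * c := tendsto_nhds_unique hR (hc.tendsto_deriv_right hn)
  obtain ⟨t, ht, hft⟩ := hf.exists_pos_left_of_tendsto_deriv ha₀ haπ.le hL
    (neg_neg_of_pos (mul_pos hn hc.pos)) 0 ha₀
  exact absurd hft (hbelow t ht)

end IsAngularProfile

theorem IsAngularProfile.isArch_nat_mul {N : ℕ} {c : ℝ} {f f' : ℝ → ℝ}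
    (hf : IsAngularProfile N f f') (hN : 0 < N) (hc : IsArch f f' N 0 c) :
    ∀ k < N, IsArch f f' N (k * (π / N)) c := by
  have hn : (0 : ℝ) < N := Nat.cast_pos.2 hN
  intro k
  induction k with
  | zero => simpa using fun _ => hc
  | succ k ih =>
    intro hk
    have hk' : (k : ℝ) + 1 < N := by exact_mod_cast hk
    have hlt : k * (π / N) + π / N < π := by
      calc k * (π / N) + π / N = (k + 1) * (π / N) := by ring
        _ < N * (π / N) := by gcongr
        _ = π := mul_div_cancel₀ π hn.ne'
    have := hf.isArch_add_pi_div hn (ih (by omega)) (by positivity) hlt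
    rwa [show k * (π / N) + π / N = ((k + 1 : ℕ) : ℝ) * (π / N) by push_cast; ring] at this

theorem exists_nat_lt_mem_Icc {N : ℕ} (hN : 0 < N) {θ : ℝ} (hθ : θ ∈ Icc 0 π) :
    ∃ k < N, θ ∈ Icc (k * (π / N)) (k * (π / N) + π / N) := by
  have hπN : 0 < π / N := div_pos pi_pos (Nat.cast_pos.2 hN)
  rcases hθ.2.lt_or_eq with hlt | rfl
  · have hx : 0 ≤ θ / (π / N) := div_nonneg hθ.1 hπN.le
    refine ⟨⌊θ / (π / N)⌋₊, (Nat.floor_lt hx).2 ?_, ?_, ?_⟩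
    · rwa [div_lt_iff₀ hπN, mul_div_cancel₀ π (Nat.cast_pos.2 hN).ne']
    · exact (le_div_iff₀ hπN).1 (Nat.floor_le hx)
    · have := (div_lt_iff₀ hπN).1 (Nat.lt_floor_add_one (θ / (π / N)))
      linarith
  · refine ⟨N - 1, by omega, ?_, ?_⟩ <;>
      rw [Nat.cast_sub hN, Nat.cast_one] <;> field_simp <;> linarith [pi_pos]

theorem eq_mul_abs_sin_of_isArch {N : ℕ} {c : ℝ} {f f' : ℝ → ℝ} (hN : 0 < N)
    (harch : ∀ k < N, IsArch f f' N (k * (π / N)) c) :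
    ∀ θ ∈ Icc 0 π, f θ = c * |sin (N * θ)| := by
  intro θ hθ
  obtain ⟨k, hk, hθk⟩ := exists_nat_lt_mem_Icc hN hθ
  have hn : (N : ℝ) ≠ 0 := Nat.cast_ne_zero.2 hN.ne'
  have hshift : N * θ = N * (θ - k * (π / N)) + k * π := by field_simp; ring
  have hnonneg : 0 ≤ sin (N * (θ - k * (π / N))) := by
    refine sin_nonneg_of_nonneg_of_le_pi (by nlinarith [hθk.1]) ?_
    calc N * (θ - k * (π / N)) ≤ N * (π / N) := by gcongr; linarith [hθk.2]
      _ = π := mul_div_cancel₀ π hn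
  rw [(harch k hk).eqOn hθk, hshift, sin_add_nat_mul_pi, abs_mul, abs_pow, abs_neg, abs_one,
    one_pow, one_mul, abs_of_nonneg hnonneg]

theorem eq_div_sqrt_integral_sq_of_eq_mul {f g : ℝ → ℝ} {a b c : ℝ} (hab : a ≤ b) (hc : 0 < c)
    (hfg : ∀ x ∈ Icc a b, f x = c * g x) (hnorm : ∫ x in a..b, f x ^ 2 = 1) :
    ∀ x ∈ Icc a b, f x = g x / √(∫ x in a..b, g x ^ 2) := by
  have hI : c ^ 2 * ∫ x in a..b, g x ^ 2 = 1 := by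
    rw [← intervalIntegral.integral_const_mul, ← hnorm]
    refine intervalIntegral.integral_congr fun x hx => ?_
    rw [uIcc_of_le hab] at hx
    simp only [hfg x hx, mul_pow]
  have hsqrt : √(∫ x in a..b, g x ^ 2) = c⁻¹ := by
    rw [show ∫ x in a..b, g x ^ 2 = c⁻¹ ^ 2 by field_simp; linarith, sqrt_sq (inv_nonneg.2 hc.le)]
  intro x hx
  rw [hfg x hx, hsqrt, div_inv_eq_mul, mul_comm]

/-- ODE classification of the angular profile: a continuous nonnegative `f` on `[0,π]` with
`f(0)=f(π)=0`, `∫₀^π f² = 1`, satisfying `f'' + N² f = 0` on `{f > 0}` and the reflection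
condition `lim_{τ→θ*+} f'(τ) = -lim_{τ→θ*-} f'(τ)` at every interior zero, which is positive
on some subinterval, equals the normalized profile `|sin(Nθ)|/√(∫₀^π sin²(Nθ)dθ)`. -/
theorem stmt13 (N : ℕ) (hN : 2 ≤ N) (f f' : ℝ → ℝ)
    (hcont : ContinuousOn f (Set.Icc 0 π))
    (hnn : ∀ θ ∈ Set.Icc (0:ℝ) π, 0 ≤ f θ)
    (h0 : f 0 = 0) (hπ : f π = 0)
    (hnorm : ∫ θ in (0:ℝ)..π, (f θ)^2 = 1)
    (hode : ∀ θ ∈ Set.Ioo (0:ℝ) π, 0 < f θ →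
      HasDerivAt f (f' θ) θ ∧ HasDerivAt f' (-(N^2 : ℝ) * f θ) θ)
    (hrefl : ∀ θ ∈ Set.Ioo (0:ℝ) π, f θ = 0 → ∃ L : ℝ,
      Filter.Tendsto f' (nhdsWithin θ (Set.Ioi θ)) (nhds L) ∧
      Filter.Tendsto f' (nhdsWithin θ (Set.Iio θ)) (nhds (-L)))
    (hsub : ∃ a b : ℝ, 0 ≤ a ∧ a < b ∧ b ≤ π ∧ ∀ θ ∈ Set.Ioo a b, 0 < f θ) :
    ∀ θ ∈ Set.Icc (0:ℝ) π,
      f θ = |Real.sin (N * θ)| / Real.sqrt (∫ t in (0:ℝ)..π, (Real.sin (N * t))^2) := by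
  have hN₀ : 0 < N := by omega
  have hf : IsAngularProfile N f f' := ⟨hcont, hnn, h0, hπ, hode, hrefl⟩
  obtain ⟨a, b, ha, hab, hb, hpos⟩ := hsub
  obtain ⟨c, hc⟩ := hf.exists_isArch_zero (Nat.cast_pos.2 hN₀)
    ⟨(a + b) / 2, ⟨by linarith, by linarith⟩, hpos _ ⟨by linarith, by linarith⟩⟩
  simpa only [sq_abs] using eq_div_sqrt_integral_sq_of_eq_mul pi_pos.le hc.pos
    (eq_mul_abs_sin_of_isArch hN₀ (hf.isArch_nat_mul hN₀ hc)) hnorm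
end
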